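/- Let m ≥ 2 and let W1, W2 be Lagrangian subspaces of ℝ^{2m} (with the standard symplectic form Ω) such that dim(W1 ∩ W2) = m − 1. For a Lagrangian subspace W ∉ {W1, W2}, there exists a Lagrangian symmetry g at W with g(W1) = W1 and g(W2) = W2 if and only if W ∩ (W1 + W2) ⊆ W1 or W ∩ (W1 + W2) ⊆ W2. -/

import Mathlib

/-- The standard symplectic form on `ℝ^{2m}`:
`Ω(x,y) = Σ_{i=1}^m (x_i y_{m+i} − x_{m+i} y_i)`. -/
def Omega (m : ℕ) (x y : Fin (2 * m) → ℝ) : ℝ :=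
  ∑ i : Fin m,
    (x ⟨i.1, by have := i.2; omega⟩ * y ⟨m + i.1, by have := i.2; omega⟩ -
      x ⟨m + i.1, by have := i.2; omega⟩ * y ⟨i.1, by have := i.2; omega⟩)

/-- A subspace of `ℝ^{2m}` is Lagrangian if it has dimension `m` and `Ω` vanishes on it. -/
def IsLagrangian (m : ℕ) (W : Submodule ℝ (Fin (2 * m) → ℝ)) : Prop :=
  Module.finrank ℝ W = m ∧ ∀ x ∈ W, ∀ y ∈ W, Omega m x y = 0

/-- A *Lagrangian symmetry* at a Lagrangian subspace `W ⊆ ℝ^{2m}`: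
an invertible linear map `g` such that for some `c ≠ 0`, `g w = c • w` for all `w ∈ W`
and `Ω(g x, g y) = −c² Ω(x, y)` for all `x, y`. -/
def LagSym (m : ℕ) (W : Submodule ℝ (Fin (2 * m) → ℝ))
    (g : (Fin (2 * m) → ℝ) ≃ₗ[ℝ] (Fin (2 * m) → ℝ)) : Prop :=
  ∃ c : ℝ, c ≠ 0 ∧ (∀ w ∈ W, g w = c • w) ∧
    ∀ x y : Fin (2 * m) → ℝ, Omega m (g x) (g y) = -c ^ 2 * Omega m x y

/-! Put `V = W1 + W2` and `U = W1 ∩ W2`, so that `V = U^⊥`.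

If `g` is a Lagrangian symmetry at `W` preserving `W1` and `W2`, and `z = z₁ + z₂ ∈ W ∩ V` with
`zᵢ ∈ Wᵢ`, then `g z₁ = c z₁ + u` and `g z₂ = c z₂ - u` with `u ∈ U`; hence
`Ω(g z₂, g z₁) = c² Ω(z₂, z₁)`, which must equal `-c² Ω(z₂, z₁)`, so `z₂ ⊥ z₁`. If `z₂ ∉ W1`, then
`W2 = U + ℝ z₂` is orthogonal to `z₁`, so `z₁ ∈ W2^⊥ = W2`. Thus `W ∩ V ⊆ W1 ∪ W2`, and a subspace
covered by two subspaces lies in one of them.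

Conversely, let `W ∩ V ⊆ W1`. A complement `S` of `W ∩ W2` in `W2` is isotropic and transverse to
`W`, so it extends to a Lagrangian complement `W'` of `W`. The reflection that is the identity on
`W` and `-1` on `W'` is anti-symplectic; it preserves `W2 = (W ∩ W2) ⊕ S`, and it preserves `W1`
because `dim (W ∩ V) = dim (W ∩ U) + m - dim U` (as `(W ∩ U)^⊥ = W + V`) forces
`W1 = (W ∩ W1) ⊕ (W' ∩ W1)`. -/

open Module Submodule

namespace Submodule

section Ring

variable {R V : Type*} [Ring R] [AddCommGroup V] [Module R V] {p q r : Submodule R V}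

theorem le_or_le_of_forall_mem_or_mem (h : ∀ x ∈ r, x ∈ p ∨ x ∈ q) : r ≤ p ∨ r ≤ q := by
  by_contra! hpq
  obtain ⟨x, hxr, hxp⟩ := SetLike.not_le_iff_exists.1 hpq.1
  obtain ⟨y, hyr, hyq⟩ := SetLike.not_le_iff_exists.1 hpq.2
  have hxq := (h x hxr).resolve_left hxp
  have hyp := (h y hyr).resolve_right hyq
  rcases h (x + y) (add_mem hxr hyr) with hp | hq
  · exact hxp (by simpa using sub_mem hp hyp)
  · exact hyq (by simpa using sub_mem hq hxq)

noncomputable def reflectionOfIsCompl (p q : Submodule R V) (h : IsCompl p q) : V ≃ₗ[R] V :=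
  (prodEquivOfIsCompl p q h).symm ≪≫ₗ (LinearEquiv.refl R p).prodCongr (LinearEquiv.neg R) ≪≫ₗ
    prodEquivOfIsCompl p q h

theorem reflectionOfIsCompl_add (h : IsCompl p q) {a b : V} (ha : a ∈ p) (hb : b ∈ q) :
    reflectionOfIsCompl p q h (a + b) = a - b := by
  have hsymm : (prodEquivOfIsCompl p q h).symm (a + b) = (⟨a, ha⟩, ⟨b, hb⟩) :=
    (prodEquivOfIsCompl p q h).symm_apply_eq.2 rfl
  simp [reflectionOfIsCompl, hsymm, sub_eq_add_neg]

theorem map_reflectionOfIsCompl_eq_self (h : IsCompl p q) (hr : r ≤ r ⊓ p ⊔ r ⊓ q) :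
    r.map (reflectionOfIsCompl p q h : V →ₗ[R] V) = r := by
  refine le_antisymm ?_ fun x hx => ?_
  · rintro _ ⟨x, hx, rfl⟩
    obtain ⟨a, ha, b, hb, rfl⟩ := mem_sup.1 (hr hx)
    simpa [reflectionOfIsCompl_add h ha.2 hb.2] using sub_mem ha.1 hb.1
  · obtain ⟨a, ha, b, hb, rfl⟩ := mem_sup.1 (hr hx)
    refine ⟨a + -b, add_mem ha.1 (neg_mem hb.1), ?_⟩
    simp [reflectionOfIsCompl_add h ha.2 (neg_mem hb.2)]

end Ring

theorem le_inf_sup_inf_of_finrank_le {K V : Type*} [DivisionRing K] [AddCommGroup V]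
    [Module K V] [FiniteDimensional K V] {p L L' : Submodule K V} (h : Disjoint L L')
    (hp : finrank K p ≤ finrank K ↥(p ⊓ L) + finrank K ↥(p ⊓ L')) : p ≤ p ⊓ L ⊔ p ⊓ L' := by
  have hsum := finrank_sup_add_finrank_inf_eq (p ⊓ L) (p ⊓ L')
  rw [(h.mono inf_le_right inf_le_right).eq_bot, finrank_bot] at hsum
  exact (eq_of_le_of_finrank_le (sup_le inf_le_left inf_le_left) (by omega)).ge

end Submodule

/-! Here `B.orthogonal L = L` says that `L` is Lagrangian, and `S ≤ B.orthogonal S` that `S` is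
isotropic. -/

namespace LinearMap.BilinForm

section CommRing

variable {R M : Type*} [CommRing R] [AddCommGroup M] [Module R M] {B : LinearMap.BilinForm R M}

theorem orthogonal_sup (S T : Submodule R M) :
    B.orthogonal (S ⊔ T) = B.orthogonal S ⊓ B.orthogonal T := by
  refine le_antisymm (le_inf (orthogonal_le le_sup_left) (orthogonal_le le_sup_right)) ?_
  rintro x ⟨hxS, hxT⟩ n hn
  obtain ⟨s, hs, t, ht, rfl⟩ := mem_sup.1 hn
  simp [(mem_orthogonal_iff.1 hxS) s hs, (mem_orthogonal_iff.1 hxT) t ht]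

theorem apply_reflectionOfIsCompl {p q : Submodule R M} (h : IsCompl p q)
    (hp : p ≤ B.orthogonal p) (hq : q ≤ B.orthogonal q) (x y : M) :
    B (reflectionOfIsCompl p q h x) (reflectionOfIsCompl p q h y) = -B x y := by
  have hx : x ∈ p ⊔ q := h.sup_eq_top ▸ mem_top
  have hy : y ∈ p ⊔ q := h.sup_eq_top ▸ mem_top
  obtain ⟨a, ha, a', ha', rfl⟩ := mem_sup.1 hx
  obtain ⟨b, hb, b', hb', rfl⟩ := mem_sup.1 hy
  have hab : B a b = 0 := hp hb a ha
  have hab' : B a' b' = 0 := hq hb' a' ha'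
  simp only [reflectionOfIsCompl_add h ha ha', reflectionOfIsCompl_add h hb hb', map_add,
    map_sub, LinearMap.add_apply, LinearMap.sub_apply, hab, hab']
  ring

theorem sup_span_singleton_le_orthogonal (hA : B.IsAlt) {T : Submodule R M}
    (hT : T ≤ B.orthogonal T) {v : M} (hv : v ∈ B.orthogonal T) :
    T ⊔ R ∙ v ≤ B.orthogonal (T ⊔ R ∙ v) := by
  have hvT : R ∙ v ≤ B.orthogonal T := (span_singleton_le_iff_mem v _).2 hv
  have hTv : T ≤ B.orthogonal (R ∙ v) := fun t ht n hn => by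
    obtain ⟨a, rfl⟩ := mem_span_singleton.1 hn
    simp [hA.isRefl _ _ (hv t ht)]
  have hvv : R ∙ v ≤ B.orthogonal (R ∙ v) := (span_singleton_le_iff_mem v _).2 fun n hn => by
    obtain ⟨a, rfl⟩ := mem_span_singleton.1 hn
    simp [hA.self_eq_zero]
  rw [orthogonal_sup]
  exact sup_le (le_inf hT hTv) (le_inf hvT hvv)

end CommRing

variable {K V : Type*} [Field K] [AddCommGroup V] [Module K V] [FiniteDimensional K V]
  {B : LinearMap.BilinForm K V}

theorem finrank_add_finrank_of_orthogonal_eq_self (hB : B.Nondegenerate) {L : Submodule K V}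
    (hL : B.orthogonal L = L) : finrank K L + finrank K L = finrank K V := by
  have h := finrank_orthogonal hB L
  rw [hL] at h
  have := L.finrank_le
  omega

theorem finrank_inf_orthogonal_add_finrank (hB : B.Nondegenerate) (hB₀ : B.IsRefl)
    {L : Submodule K V} (hL : B.orthogonal L = L) (U : Submodule K V) :
    finrank K ↥(L ⊓ B.orthogonal U) + finrank K U = finrank K L + finrank K ↥(L ⊓ U) := by
  have hsup : B.orthogonal (L ⊔ B.orthogonal U) = L ⊓ U := by
    rw [orthogonal_sup, hL, orthogonal_orthogonal hB hB₀]
  have h₁ := finrank_orthogonal hB (L ⊔ B.orthogonal U)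
  have h₂ := finrank_orthogonal hB U
  have h₃ := finrank_sup_add_finrank_inf_eq L (B.orthogonal U)
  have := (L ⊔ B.orthogonal U).finrank_le
  have := U.finrank_le
  rw [hsup] at h₁
  omega

theorem orthogonal_eq_self_of_orthogonal_le_sup (hB : B.Nondegenerate) (hB₀ : B.IsRefl)
    {L T : Submodule K V} (hL : B.orthogonal L = L) (hT : T ≤ B.orthogonal T)
    (h : B.orthogonal T ≤ T ⊔ L) : B.orthogonal T = T := by
  have hinf : B.orthogonal T ⊓ L ≤ T := by
    simpa [orthogonal_sup, hL, orthogonal_orthogonal hB hB₀] using orthogonal_le (B := B) h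
  refine le_antisymm ?_ hT
  calc B.orthogonal T = (T ⊔ L) ⊓ B.orthogonal T := (inf_eq_right.2 h).symm
    _ = T ⊔ L ⊓ B.orthogonal T := sup_inf_assoc_of_le L hT
    _ ≤ T := sup_le le_rfl (inf_comm L _ ▸ hinf)

theorem exists_isCompl_orthogonal_eq_self_le (hB : B.Nondegenerate) (hA : B.IsAlt)
    {L S : Submodule K V} (hL : B.orthogonal L = L) (hS : S ≤ B.orthogonal S)
    (hSL : Disjoint S L) : ∃ L', IsCompl L L' ∧ B.orthogonal L' = L' ∧ S ≤ L' := by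
  obtain ⟨T, ⟨hST, hT, hTL⟩, hmax⟩ := set_has_maximal_iff_noetherian.2 inferInstance
    {T : Submodule K V | S ≤ T ∧ T ≤ B.orthogonal T ∧ Disjoint T L} ⟨S, le_rfl, hS, hSL⟩
  -- a maximal isotropic subspace transverse to `L` is Lagrangian
  have hTT : B.orthogonal T = T := by
    by_contra hne
    obtain ⟨v, hv, hvTL⟩ := SetLike.not_le_iff_exists.1
      (mt (orthogonal_eq_self_of_orthogonal_le_sup hB hA.isRefl hL hT) hne)
    have hvT : v ∉ T := fun h => hvTL (mem_sup_left h)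
    refine hmax (T ⊔ K ∙ v) ⟨le_sup_left.trans' hST, sup_span_singleton_le_orthogonal hA hT hv,
      ?_⟩ (left_lt_sup.2 fun h => hvT ((span_singleton_le_iff_mem v T).1 h))
    rw [sup_comm]
    exact hTL.disjoint_sup_left_of_disjoint_sup_right
      ((disjoint_span_singleton.2 fun h => absurd h hvTL).symm)
  refine ⟨T, (isCompl_iff_disjoint L T ?_).2 hTL.symm, hTT, hST⟩
  have := finrank_add_finrank_of_orthogonal_eq_self hB hL
  have := finrank_add_finrank_of_orthogonal_eq_self hB hTT
  omega

theorem mem_or_mem_of_apply_eq_smul [NeZero (2 : K)] {L₁ L₂ : Submodule K V}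
    (hL₁ : B.orthogonal L₁ = L₁) (hL₂ : B.orthogonal L₂ = L₂)
    (hcodim : finrank K L₂ ≤ finrank K ↥(L₁ ⊓ L₂) + 1) {g : V →ₗ[K] V} {c : K} (hc : c ≠ 0)
    (hg : ∀ x y, B (g x) (g y) = -c ^ 2 * B x y) (hg₁ : L₁.map g ≤ L₁) (hg₂ : L₂.map g ≤ L₂)
    {z : V} (hz : z ∈ L₁ ⊔ L₂) (hgz : g z = c • z) : z ∈ L₁ ∨ z ∈ L₂ := by
  obtain ⟨z₁, hz₁, z₂, hz₂, rfl⟩ := mem_sup.1 hz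
  by_cases hz₂L₁ : z₂ ∈ L₁
  · exact .inl (add_mem hz₁ hz₂L₁)
  refine .inr (add_mem ?_ hz₂)
  set u := g z₁ - c • z₁ with hu
  have hgz₁ : g z₁ = c • z₁ + u := by rw [hu]; abel
  have hgz₂ : g z₂ = c • z₂ - u := by
    rw [map_add, smul_add] at hgz
    rw [hu]; linear_combination (norm := module) hgz
  have hu₁ : u ∈ L₁ := sub_mem (hg₁ (mem_map_of_mem hz₁)) (L₁.smul_mem c hz₁)
  have hu₂ : u ∈ L₂ := by
    simpa [hgz₂] using sub_mem (L₂.smul_mem c hz₂) (hg₂ (mem_map_of_mem hz₂))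
  have h₁ {x y : V} (hx : x ∈ L₁) (hy : y ∈ L₁) : B x y = 0 := hL₁.ge hy x hx
  have h₂ {x y : V} (hx : x ∈ L₂) (hy : y ∈ L₂) : B x y = 0 := hL₂.ge hy x hx
  have hBz : B z₂ z₁ = 0 := by
    have key := hg z₂ z₁
    simp only [hgz₁, hgz₂, map_add, map_sub, map_smul, LinearMap.sub_apply, LinearMap.smul_apply,
      smul_eq_mul, h₂ hz₂ hu₂, h₁ hu₁ hz₁, h₁ hu₁ hu₁] at key
    have : (2 * c ^ 2) * B z₂ z₁ = 0 := by linear_combination key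
    simpa [hc, two_ne_zero] using this
  have hL₂_eq : L₁ ⊓ L₂ ⊔ K ∙ z₂ = L₂ := by
    refine eq_of_le_of_finrank_le (sup_le inf_le_right ((span_singleton_le_iff_mem _ _).2 hz₂))
      (hcodim.trans (finrank_lt_finrank_of_lt (left_lt_sup.2 fun h => hz₂L₁ ?_)))
    exact ((span_singleton_le_iff_mem _ _).1 h).1
  rw [← hL₂, ← hL₂_eq, orthogonal_sup]
  refine ⟨fun v hv => h₁ hv.1 hz₁, fun v hv => ?_⟩
  obtain ⟨a, rfl⟩ := mem_span_singleton.1 hv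
  simp [hBz]

theorem finrank_inf_sup_add_finrank_inf (hB : B.Nondegenerate) (hB₀ : B.IsRefl)
    {L L₁ L₂ : Submodule K V} (hL : B.orthogonal L = L) (hL₁ : B.orthogonal L₁ = L₁)
    (hL₂ : B.orthogonal L₂ = L₂) :
    finrank K ↥(L ⊓ (L₁ ⊔ L₂)) + finrank K ↥(L₁ ⊓ L₂) =
      finrank K L + finrank K ↥(L ⊓ (L₁ ⊓ L₂)) := by
  have hU : B.orthogonal (L₁ ⊓ L₂) = L₁ ⊔ L₂ := by
    rw [← orthogonal_orthogonal hB hB₀ (L₁ ⊔ L₂), orthogonal_sup, hL₁, hL₂]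
  have h := finrank_inf_orthogonal_add_finrank hB hB₀ hL (L₁ ⊓ L₂)
  rwa [hU] at h

theorem exists_isCompl_orthogonal_eq_self_le_inf_sup_inf (hB : B.Nondegenerate) (hA : B.IsAlt)
    {L L₁ L₂ : Submodule K V} (hL : B.orthogonal L = L) (hL₁ : B.orthogonal L₁ = L₁)
    (hL₂ : B.orthogonal L₂ = L₂) (hsub : L ⊓ (L₁ ⊔ L₂) ≤ L₁) :
    ∃ L', IsCompl L L' ∧ B.orthogonal L' = L' ∧
      L₁ ≤ L₁ ⊓ L ⊔ L₁ ⊓ L' ∧ L₂ ≤ L₂ ⊓ L ⊔ L₂ ⊓ L' := by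
  obtain ⟨C, hC⟩ := (L₂ ⊓ L).exists_isCompl
  have hS : L₂ ⊓ L ⊔ C ⊓ L₂ = L₂ := by
    rw [← sup_inf_assoc_of_le C inf_le_left, hC.sup_eq_top, top_inf_eq]
  have hSL : Disjoint (C ⊓ L₂) L := by
    rw [disjoint_iff, inf_assoc]
    exact hC.symm.inf_eq_bot
  obtain ⟨L', hLL', hL', hSL'⟩ := exists_isCompl_orthogonal_eq_self_le hB hA hL
    ((inf_le_right.trans hL₂.ge).trans (orthogonal_le inf_le_right)) hSL
  refine ⟨L', hLL', hL', le_inf_sup_inf_of_finrank_le hLL'.disjoint ?_,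
    hS.ge.trans (sup_le_sup_left (le_inf inf_le_right hSL') _)⟩
  have hL₂L : L₂ ⊓ L ≤ L₁ := fun x hx => hsub ⟨hx.2, mem_sup_right hx.1⟩
  have hV : L ⊓ (L₁ ⊔ L₂) = L₁ ⊓ L :=
    le_antisymm (le_inf hsub inf_le_left) (inf_comm L₁ L ▸ inf_le_inf_left L le_sup_left)
  have hU : L ⊓ (L₁ ⊓ L₂) = L₂ ⊓ L :=
    le_antisymm (fun x hx => ⟨hx.2.2, hx.1⟩) (fun x hx => ⟨hx.2, hL₂L hx, hx.1⟩)
  have hdim := finrank_inf_sup_add_finrank_inf hB hA.isRefl hL hL₁ hL₂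
  rw [hV, hU] at hdim
  have hS_dim := finrank_sup_add_finrank_inf_eq (L₂ ⊓ L) (C ⊓ L₂)
  rw [hS, (hC.disjoint.mono_right inf_le_left).eq_bot, finrank_bot] at hS_dim
  have hSU_dim := finrank_sup_add_finrank_inf_eq (C ⊓ L₂) (L₁ ⊓ L₂)
  have hSU_le := finrank_mono (sup_le inf_le_right inf_le_right : C ⊓ L₂ ⊔ L₁ ⊓ L₂ ≤ L₂)
  have hSU_L' := finrank_mono
    (le_inf (inf_le_right.trans inf_le_left) (inf_le_left.trans hSL') :
      C ⊓ L₂ ⊓ (L₁ ⊓ L₂) ≤ L₁ ⊓ L')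
  have hL_dim := finrank_add_finrank_of_orthogonal_eq_self hB hL
  have hL₁_dim := finrank_add_finrank_of_orthogonal_eq_self hB hL₁
  have hL₂_dim := finrank_add_finrank_of_orthogonal_eq_self hB hL₂
  omega

end LinearMap.BilinForm

noncomputable def omegaForm (m : ℕ) : LinearMap.BilinForm ℝ (Fin (2 * m) → ℝ) :=
  LinearMap.mk₂ ℝ (Omega m)
    (fun _ _ _ => by
      simp only [Omega, Pi.add_apply, ← Finset.sum_add_distrib]
      exact Finset.sum_congr rfl fun _ _ => by ring)
    (fun _ _ _ => by
      simp only [Omega, Pi.smul_apply, smul_eq_mul, Finset.mul_sum]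
      exact Finset.sum_congr rfl fun _ _ => by ring)
    (fun _ _ _ => by
      simp only [Omega, Pi.add_apply, ← Finset.sum_add_distrib]
      exact Finset.sum_congr rfl fun _ _ => by ring)
    (fun _ _ _ => by
      simp only [Omega, Pi.smul_apply, smul_eq_mul, Finset.mul_sum]
      exact Finset.sum_congr rfl fun _ _ => by ring)

@[simp]
theorem omegaForm_apply {m : ℕ} (x y : Fin (2 * m) → ℝ) : omegaForm m x y = Omega m x y := rfl

theorem isAlt_omegaForm (m : ℕ) : (omegaForm m).IsAlt := fun x => by
  simp [Omega, mul_comm]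

theorem Omega_single_add {m : ℕ} (x : Fin (2 * m) → ℝ) (j : Fin m) :
    Omega m x (Pi.single ⟨m + j, by omega⟩ 1) = x ⟨j, by omega⟩ := by
  have (i : Fin m) : (i : ℕ) ≠ m + j := by omega
  simp [Omega, Pi.single_apply, Fin.mk.injEq, Fin.val_inj, this]

theorem Omega_single {m : ℕ} (x : Fin (2 * m) → ℝ) (j : Fin m) :
    Omega m x (Pi.single ⟨j, by omega⟩ 1) = -x ⟨m + j, by omega⟩ := by
  have (i : Fin m) : m + (i : ℕ) ≠ j := by omega
  simp [Omega, Pi.single_apply, Fin.mk.injEq, Fin.val_inj, this]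

theorem nondegenerate_omegaForm (m : ℕ) : (omegaForm m).Nondegenerate := by
  refine (isAlt_omegaForm m).isRefl.nondegenerate_iff_separatingLeft.2
    fun x hx => funext fun j => ?_
  rcases lt_or_ge j.1 m with hj | hj
  · exact (Omega_single_add x ⟨j, hj⟩).symm.trans (hx _)
  · have h := (Omega_single x ⟨j - m, by omega⟩).symm.trans (hx _)
    rwa [show (⟨m + (j - m), _⟩ : Fin (2 * m)) = j from Fin.ext (by simp; omega),
      neg_eq_zero] at h

theorem IsLagrangian.orthogonal_omegaForm_eq {m : ℕ} {W : Submodule ℝ (Fin (2 * m) → ℝ)}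
    (hW : IsLagrangian m W) : (omegaForm m).orthogonal W = W := by
  have hiso : W ≤ (omegaForm m).orthogonal W := fun y hy x hx => hW.2 x hx y hy
  refine (eq_of_le_of_finrank_eq hiso ?_).symm
  rw [LinearMap.BilinForm.finrank_orthogonal (nondegenerate_omegaForm m), hW.1,
    finrank_fin_fun]
  omega

theorem exists_lagSym_of_inf_sup_le {m : ℕ} {W W₁ W₂ : Submodule ℝ (Fin (2 * m) → ℝ)}
    (hW : IsLagrangian m W) (h₁ : IsLagrangian m W₁) (h₂ : IsLagrangian m W₂)
    (hsub : W ⊓ (W₁ ⊔ W₂) ≤ W₁) :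
    ∃ g : (Fin (2 * m) → ℝ) ≃ₗ[ℝ] (Fin (2 * m) → ℝ), LagSym m W g ∧
      W₁.map g.toLinearMap = W₁ ∧ W₂.map g.toLinearMap = W₂ := by
  obtain ⟨W', hWW', hW', hs₁, hs₂⟩ :=
    LinearMap.BilinForm.exists_isCompl_orthogonal_eq_self_le_inf_sup_inf
      (nondegenerate_omegaForm m) (isAlt_omegaForm m) hW.orthogonal_omegaForm_eq
      h₁.orthogonal_omegaForm_eq h₂.orthogonal_omegaForm_eq hsub
  refine ⟨reflectionOfIsCompl W W' hWW', ⟨1, one_ne_zero, fun w hw => ?_, fun x y => ?_⟩,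
    map_reflectionOfIsCompl_eq_self hWW' hs₁, map_reflectionOfIsCompl_eq_self hWW' hs₂⟩
  · simpa using reflectionOfIsCompl_add hWW' hw (zero_mem W')
  · simpa using LinearMap.BilinForm.apply_reflectionOfIsCompl hWW'
      hW.orthogonal_omegaForm_eq.ge hW'.ge x y

theorem stmt3_general (m : ℕ)
    (W1 W2 : Submodule ℝ (Fin (2 * m) → ℝ))
    (h1 : IsLagrangian m W1) (h2 : IsLagrangian m W2)
    (hint : Module.finrank ℝ ↥(W1 ⊓ W2) = m - 1)
    (W : Submodule ℝ (Fin (2 * m) → ℝ)) (hW : IsLagrangian m W) :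
    (∃ g : (Fin (2 * m) → ℝ) ≃ₗ[ℝ] (Fin (2 * m) → ℝ), LagSym m W g ∧
        W1.map g.toLinearMap = W1 ∧ W2.map g.toLinearMap = W2)
      ↔ (W ⊓ (W1 ⊔ W2) ≤ W1 ∨ W ⊓ (W1 ⊔ W2) ≤ W2) := by
  constructor
  · rintro ⟨g, ⟨c, hc, hgW, hgΩ⟩, hg1, hg2⟩
    refine le_or_le_of_forall_mem_or_mem fun z hz => ?_
    refine LinearMap.BilinForm.mem_or_mem_of_apply_eq_smul h1.orthogonal_omegaForm_eq
      h2.orthogonal_omegaForm_eq ?_ hc hgΩ hg1.le hg2.le hz.2 (hgW z hz.1)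
    rw [h2.1, hint]
    omega
  · rintro (hsub | hsub)
    · exact exists_lagSym_of_inf_sup_le hW h1 h2 hsub
    · obtain ⟨g, hg, hg2, hg1⟩ := exists_lagSym_of_inf_sup_le hW h2 h1 (sup_comm W1 W2 ▸ hsub)
      exact ⟨g, hg, hg1, hg2⟩

theorem stmt3 (m : ℕ) (hm : 2 ≤ m)
    (W1 W2 : Submodule ℝ (Fin (2 * m) → ℝ))
    (h1 : IsLagrangian m W1) (h2 : IsLagrangian m W2)
    (hint : Module.finrank ℝ ↥(W1 ⊓ W2) = m - 1)
    (W : Submodule ℝ (Fin (2 * m) → ℝ)) (hW : IsLagrangian m W)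
    (hne1 : W ≠ W1) (hne2 : W ≠ W2) :
    (∃ g : (Fin (2 * m) → ℝ) ≃ₗ[ℝ] (Fin (2 * m) → ℝ), LagSym m W g ∧
        W1.map g.toLinearMap = W1 ∧ W2.map g.toLinearMap = W2)
      ↔ (W ⊓ (W1 ⊔ W2) ≤ W1 ∨ W ⊓ (W1 ⊔ W2) ≤ W2) :=
  stmt3_general m W1 W2 h1 h2 hint W hW
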